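/- For natural numbers m, j and complex numbers b, c such that b - c is not an integer, ∑_{k=0}^{m} (-m)_k / ((b - c - j + k) · k!) = (m! / (b-c)_{m+1}) · (c - b - m)_j / (1 + c - b)_j. -/

import Mathlib

open Complex Finset

/-- Pochhammer symbol `(x)_k = x (x+1) ⋯ (x+k-1)`. -/
noncomputable def poch (x : ℂ) (k : ℕ) : ℂ := ∏ i ∈ Finset.range k, (x + i)

/-- Beta function `B(x,y) = Γ(x) Γ(y) / Γ(x+y)`. -/
noncomputable def cBeta (x y : ℂ) : ℂ :=
  Complex.Gamma x * Complex.Gamma y / Complex.Gamma (x + y)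

/-!
Since `(-m)_k / k! = (-1)^k C(m,k)`, the left side is the alternating binomial sum
`∑ (-1)^k C(m,k) / (x+k)` with `x = b - c - j`, i.e. `(-1)^m` times the `m`-th forward difference
of `n ↦ 1/(x+n)`, which is `(-1)^m m! / (x)_{m+1}` because differencing `1/(y)_{m+1}` gives
`-(m+1)/(y)_{m+2}`. The right side agrees by `(u)_{m+1} (1-u)_j = (u-j)_{m+1} (-u-m)_j`
(`u = b - c`): reflecting `(-r)_k = (-1)^k (r-k+1)_k` turns both sides into `±(u-j)_{m+1+j}`.
-/

open fwdDiff

lemma poch_succ (x : ℂ) (k : ℕ) : poch x (k + 1) = poch x k * (x + k) :=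
  prod_range_succ _ _

lemma poch_add (x : ℂ) (a b : ℕ) : poch x (a + b) = poch x a * poch (x + a) b := by
  simp only [poch, prod_range_add, Nat.cast_add, add_assoc]

lemma poch_succ' (x : ℂ) (k : ℕ) : poch x (k + 1) = x * poch (x + 1) k := by
  rw [add_comm, poch_add, Nat.cast_one]
  simp [poch]

lemma poch_eq_eval_ascPochhammer (x : ℂ) (k : ℕ) : poch x k = (ascPochhammer ℂ k).eval x := by
  induction k with
  | zero => simp [poch]
  | succ k ih => rw [poch_succ, ih, ascPochhammer_succ_eval]

lemma poch_ne_zero {x : ℂ} {n : ℕ} (hx : ∀ k < n, x + k ≠ 0) : poch x n ≠ 0 :=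
  prod_ne_zero_iff.mpr fun k hk => hx k (mem_range.mp hk)

lemma poch_neg (r : ℂ) (k : ℕ) : poch (-r) k = (-1) ^ k * poch (r - k + 1) k := by
  simp only [poch_eq_eval_ascPochhammer, ascPochhammer_eval_neg_eq_descPochhammer,
    descPochhammer_eval_eq_ascPochhammer]

lemma poch_neg_natCast_div_factorial (m k : ℕ) :
    poch (-(m : ℂ)) k / k.factorial = (-1) ^ k * m.choose k := by
  rw [poch_eq_eval_ascPochhammer, ascPochhammer_eval_neg_eq_descPochhammer,
    descPochhammer_eval_eq_descFactorial, Nat.descFactorial_eq_factorial_mul_choose,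
    Nat.cast_mul, mul_div_assoc, mul_div_cancel_left₀ _ (by exact_mod_cast k.factorial_ne_zero)]

lemma poch_mul_poch_one_sub (u : ℂ) (n j : ℕ) :
    poch u n * poch (1 - u) j = poch (u - j) n * poch (1 - u - n) j := by
  have hleft : poch (1 - u) j = (-1) ^ j * poch (u - j) j := by
    rw [← neg_sub, poch_neg]; congr 2; ring
  have hright : poch (1 - u - n) j = (-1) ^ j * poch (u - j + n) j := by
    rw [show 1 - u - n = -(u + n - 1) by ring, poch_neg]; congr 2; ring
  have hsplit := poch_add (u - j) j n
  rw [sub_add_cancel] at hsplit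
  rw [hleft, hright, mul_left_comm, mul_comm (poch u n), ← hsplit, add_comm, poch_add]
  ring

lemma inv_poch_add_one_sub_inv_poch {y : ℂ} {n : ℕ} (hy : y ≠ 0) (hyn : y + n ≠ 0) :
    (poch (y + 1) n)⁻¹ - (poch y n)⁻¹ = -n * (poch y (n + 1))⁻¹ := by
  have hcons : (poch (y + 1) n)⁻¹ = y * (poch y (n + 1))⁻¹ := by
    rw [poch_succ', mul_inv, mul_inv_cancel_left₀ hy]
  have hsnoc : (poch y n)⁻¹ = (y + n) * (poch y (n + 1))⁻¹ := by
    rw [poch_succ, mul_inv, mul_comm (poch y n)⁻¹, mul_inv_cancel_left₀ hyn]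
  rw [hcons, hsnoc]
  ring

lemma fwdDiff_iter_inv_add (x : ℂ) (hx : ∀ k : ℕ, x + k ≠ 0) (m n : ℕ) :
    (Δ_[1])^[m] (fun n : ℕ => (x + n)⁻¹) n =
      (-1) ^ m * m.factorial * (poch (x + n) (m + 1))⁻¹ := by
  induction m generalizing n with
  | zero => simp [poch]
  | succ m ih =>
    have hlast : x + n + (m + 1 : ℕ) ≠ 0 := by simpa [add_assoc] using hx (n + (m + 1))
    rw [Function.iterate_succ_apply', fwdDiff, ih, ih, Nat.cast_succ, ← add_assoc, ← mul_sub,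
      inv_poch_add_one_sub_inv_poch (hx n) hlast, Nat.factorial_succ]
    push_cast
    ring

lemma sum_neg_one_pow_mul_choose_mul {R : Type*} [CommRing R] (f : ℕ → R) (m : ℕ) :
    ∑ k ∈ range (m + 1), (-1) ^ k * m.choose k * f k = (-1) ^ m * (Δ_[1])^[m] f 0 := by
  rw [fwdDiff_iter_eq_sum_shift, mul_sum]
  refine sum_congr rfl fun k hk => ?_
  have hsign : (-1 : R) ^ m * (-1) ^ (m - k) = (-1) ^ k := by
    rw [← pow_add, show m + (m - k) = k + 2 * (m - k) by grind, pow_add, pow_mul, neg_one_sq,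
      one_pow, mul_one]
  simp only [zero_add, smul_eq_mul, mul_one, zsmul_eq_mul]
  push_cast
  rw [← hsign]
  ring

lemma sum_neg_one_pow_mul_choose_div (x : ℂ) (hx : ∀ k : ℕ, x + k ≠ 0) (m : ℕ) :
    ∑ k ∈ range (m + 1), (-1) ^ k * m.choose k / (x + k) = m.factorial / poch x (m + 1) := by
  simp only [div_eq_mul_inv]
  rw [sum_neg_one_pow_mul_choose_mul (fun k => (x + k)⁻¹), fwdDiff_iter_inv_add x hx,
    Nat.cast_zero, add_zero, ← mul_assoc, ← mul_assoc, ← pow_add, ← two_mul, pow_mul,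
    neg_one_sq, one_pow, one_mul]

theorem inner_sum_karlsson (m j : ℕ) (b c : ℂ) (h : ∀ k : ℤ, b - c ≠ k) :
    ∑ k ∈ Finset.range (m + 1),
        poch (-(m : ℂ)) k / ((b - c - j + k) * (Nat.factorial k : ℂ)) =
      ((Nat.factorial m : ℂ) / poch (b - c) (m + 1)) *
        (poch (c - b - m) j / poch (1 + c - b) j) := by
  set u := b - c
  have hshift : ∀ k : ℕ, u - j + k ≠ 0 := fun k hk =>
    h (j - k) (by push_cast; linear_combination hk)
  have hu0 : poch u (m + 1) ≠ 0 := poch_ne_zero fun k _ hk =>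
    h (-k) (by push_cast; linear_combination hk)
  have hu1 : poch (1 - u) j ≠ 0 := poch_ne_zero fun k _ hk =>
    h (1 + k) (by push_cast; linear_combination -hk)
  have huj : poch (u - j) (m + 1) ≠ 0 := poch_ne_zero fun k _ => hshift k
  calc _ = ∑ k ∈ range (m + 1), (-1) ^ k * m.choose k / (u - j + k) :=
        sum_congr rfl fun k _ => by rw [mul_comm, ← div_div, poch_neg_natCast_div_factorial]
    _ = m.factorial / poch (u - j) (m + 1) := sum_neg_one_pow_mul_choose_div _ hshift m
    _ = _ := by
      rw [show c - b - m = 1 - u - ((m + 1 : ℕ) : ℂ) by push_cast; ring,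
        show 1 + c - b = 1 - u by ring]
      field_simp
      linear_combination (m.factorial : ℂ) * poch_mul_poch_one_sub u (m + 1) j
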